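/- Let 0 < μ ≤ L, β ∈ (0,1), γ ∈ (0, 2(1+β)/L), d_N, d_T ∈ ℕ, and let H ∈ ℝ^{d_N × d_N} be symmetric with μ‖v‖² ≤ ⟨v, Hv⟩ ≤ L‖v‖² for all v ∈ ℝ^{d_N}. Define the block matrix A ∈ ℝ^{(d_N + d_N + d_T) × (d_N + d_N + d_T)} by A = [[(1+β)Id_{d_N} − γH, −β Id_{d_N}, 0], [Id_{d_N}, 0, 0], [0, 0, β Id_{d_T}]]. Then the spectral radius of A satisfies ρ(A) ≤ m(γ, β), and m(γ, β) < 1. -/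

import Mathlib

open RealInnerProductSpace

/-- The convergence rate `m(γ, β)` of Polyak's heavy ball method, for `0 < μ ≤ L`,
`β ∈ (0,1)` and `γ ∈ (0, 2(1+β)/L)`. -/
noncomputable def heavyBallRate (μ L β γ : ℝ) : ℝ :=
  if (1 - Real.sqrt β) ^ 2 / μ ≤ γ ∧ γ ≤ (1 + Real.sqrt β) ^ 2 / L then Real.sqrt β
  else if γ ≤ 2 * (1 + β) / (L + μ) then
    (1 + β - γ * μ) / 2 + Real.sqrt (((1 + β - γ * μ) / 2) ^ 2 - β)
  else (γ * L - (1 + β)) / 2 + Real.sqrt (((γ * L - (1 + β)) / 2) ^ 2 - β)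

/-!
The block `β Id` only contributes the eigenvalue `β`. On the heavy ball block, an eigenvector
`(u, v)` for `ρ` has `u = ρ v` and `H v = c v` with `ρ² - (1 + β - γ c) ρ + β = 0`; since `H`
is symmetric, `c` is a real number in `[μ, L]`. A root of `X² - b X + β` with `|b| ≤ B` and
`2 √β ≤ B` has modulus at most `B / 2 + √((B / 2)² - β)`: complex roots have modulus `√β`,
real ones are bounded by the larger root of `X² - B X + β`. The rate `m(γ, β)` is exactly this
bound for `B = max (1 + β - γ μ, γ L - (1 + β), 2 √β)`, and `B < 1 + β` gives `m(γ, β) < 1`.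
-/

open Matrix Real

/-- The larger root of `X ^ 2 - B * X + β` when `4 * β ≤ B ^ 2`. -/
noncomputable def largerRoot (B β : ℝ) : ℝ := B / 2 + √((B / 2) ^ 2 - β)

theorem Complex.normSq_eq_of_sq_sub_mul_add_eq_zero {b β : ℝ} {ρ : ℂ}
    (hρ : ρ ^ 2 - b * ρ + β = 0) (him : ρ.im ≠ 0) : Complex.normSq ρ = β := by
  have hre := congrArg Complex.re hρ
  have him' := congrArg Complex.im hρ
  simp only [sq, Complex.sub_re, Complex.add_re, Complex.mul_re, Complex.ofReal_re,
    Complex.ofReal_im, Complex.sub_im, Complex.add_im, Complex.mul_im, Complex.zero_re,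
    Complex.zero_im] at hre him'
  obtain rfl : b = 2 * ρ.re := mul_left_cancel₀ him (by linear_combination -him')
  rw [Complex.normSq_apply]
  linear_combination -hre

theorem sqrt_le_largerRoot {B β : ℝ} (hB : 2 * √β ≤ B) : √β ≤ largerRoot B β := by
  unfold largerRoot
  linarith [Real.sqrt_nonneg ((B / 2) ^ 2 - β)]

theorem norm_le_largerRoot {b B β : ℝ} {ρ : ℂ} (hb : |b| ≤ B) (hB : 2 * √β ≤ B)
    (hρ : ρ ^ 2 - b * ρ + β = 0) : ‖ρ‖ ≤ largerRoot B β := by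
  by_cases him : ρ.im = 0
  · obtain ⟨r, rfl⟩ : ∃ r : ℝ, ρ = r := ⟨ρ.re, Complex.ext rfl (by simpa using him)⟩
    have hr : r ^ 2 - b * r + β = 0 := by exact_mod_cast hρ
    have hbr : b * r ≤ B * |r| :=
      calc b * r ≤ |b| * |r| := (le_abs_self _).trans (abs_mul b r).le
        _ ≤ B * |r| := mul_le_mul_of_nonneg_right hb (abs_nonneg r)
    have hsq : (|r| - B / 2) ^ 2 ≤ (B / 2) ^ 2 - β := by nlinarith [sq_abs r]
    rw [Complex.norm_real, Real.norm_eq_abs, largerRoot]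
    linarith [le_abs_self (|r| - B / 2), Real.abs_le_sqrt hsq]
  · rw [Complex.norm_def, Complex.normSq_eq_of_sq_sub_mul_add_eq_zero hρ him]
    exact sqrt_le_largerRoot hB

theorem largerRoot_lt_one {B β : ℝ} (hβ : β < 1) (hB : B < 1 + β) : largerRoot B β < 1 := by
  have h : 0 < 1 - B / 2 := by linarith
  have : √((B / 2) ^ 2 - β) < 1 - B / 2 := by rw [Real.sqrt_lt' h]; linarith
  unfold largerRoot
  linarith

section HeavyBallRate

variable {μ L β γ : ℝ}

/-- The three regimes in the definition of `heavyBallRate` are the cases where the maximum is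
attained by `2 √β`, by `1 + β - γ μ` and by `γ L - (1 + β)`. -/
theorem heavyBallRate_eq_largerRoot (hμ : 0 < μ) (hμL : μ ≤ L) (hβ : 0 ≤ β) :
    heavyBallRate μ L β γ =
      largerRoot (max (max (1 + β - γ * μ) (γ * L - (1 + β))) (2 * √β)) β := by
  have hs := Real.sq_sqrt hβ
  have h₁ : ((1 - √β) ^ 2 / μ ≤ γ ∧ γ ≤ (1 + √β) ^ 2 / L) ↔
      max (1 + β - γ * μ) (γ * L - (1 + β)) ≤ 2 * √β := by
    rw [div_le_iff₀ hμ, le_div_iff₀ (hμ.trans_le hμL), max_le_iff]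
    constructor <;> rintro ⟨h, h'⟩ <;> constructor <;> linarith
  have h₂ : γ ≤ 2 * (1 + β) / (L + μ) ↔ γ * L - (1 + β) ≤ 1 + β - γ * μ := by
    rw [le_div_iff₀ (by linarith)]
    constructor <;> intro h <;> linarith
  unfold heavyBallRate largerRoot
  split_ifs with hA hB
  · rw [max_eq_right (h₁.mp hA)]
    simp [hs]
  · rw [max_eq_left (le_of_not_ge (mt h₁.mpr hA)), max_eq_left (h₂.mp hB)]
  · rw [max_eq_left (le_of_not_ge (mt h₁.mpr hA)),
      max_eq_right (le_of_not_ge (mt h₂.mpr hB))]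

theorem norm_le_heavyBallRate {l : ℝ} {ρ : ℂ} (hμ : 0 < μ) (hμL : μ ≤ L) (hβ : 0 ≤ β)
    (hγ : 0 ≤ γ) (hl : l ∈ Set.Icc μ L) (hρ : ρ ^ 2 - (1 + β - γ * l : ℝ) * ρ + β = 0) :
    ‖ρ‖ ≤ heavyBallRate μ L β γ := by
  rw [heavyBallRate_eq_largerRoot hμ hμL hβ]
  refine norm_le_largerRoot (abs_le.mpr ⟨?_, ?_⟩) (le_max_right _ _) hρ
  · have : γ * l ≤ γ * L := mul_le_mul_of_nonneg_left hl.2 hγ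
    exact neg_le.mp (le_max_of_le_left (le_max_of_le_right (by linarith)))
  · have : γ * μ ≤ γ * l := mul_le_mul_of_nonneg_left hl.1 hγ
    exact le_max_of_le_left (le_max_of_le_left (by linarith))

theorem sqrt_le_heavyBallRate (hμ : 0 < μ) (hμL : μ ≤ L) (hβ : 0 ≤ β) :
    √β ≤ heavyBallRate μ L β γ := by
  rw [heavyBallRate_eq_largerRoot hμ hμL hβ]
  exact sqrt_le_largerRoot (le_max_right _ _)

theorem heavyBallRate_lt_one (hμ : 0 < μ) (hμL : μ ≤ L) (hβ : β ∈ Set.Ioo 0 1)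
    (hγ : γ ∈ Set.Ioo 0 (2 * (1 + β) / L)) : heavyBallRate μ L β γ < 1 := by
  rw [heavyBallRate_eq_largerRoot hμ hμL hβ.1.le]
  refine largerRoot_lt_one hβ.2 (max_lt (max_lt ?_ ?_) ?_)
  · linarith [mul_pos hγ.1 hμ]
  · linarith [(lt_div_iff₀ (hμ.trans_le hμL)).mp hγ.2]
  · have hs : √β < 1 := (Real.sqrt_lt' one_pos).mpr (by linarith [hβ.2])
    nlinarith [Real.sq_sqrt hβ.1.le]

end HeavyBallRate

theorem Matrix.mem_spectrum_iff_exists_mulVec_eq_smul {K n : Type*} [Field K] [Fintype n]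
    [DecidableEq n] {M : Matrix n n K} {ρ : K} :
    ρ ∈ spectrum K M ↔ ∃ v ≠ 0, M *ᵥ v = ρ • v := by
  rw [spectrum.mem_iff, isUnit_iff_isUnit_det, isUnit_iff_ne_zero, not_not,
    ← exists_mulVec_eq_zero_iff]
  simp only [Algebra.algebraMap_eq_smul_one, sub_mulVec, smul_mulVec, one_mulVec, sub_eq_zero,
    eq_comm]

theorem Matrix.spectrum_fromBlocks_zero {R m n : Type*} [CommRing R] [Fintype m] [Fintype n]
    [DecidableEq m] [DecidableEq n] (A : Matrix m m R) (D : Matrix n n R) :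
    spectrum R (fromBlocks A 0 0 D) = spectrum R A ∪ spectrum R D := by
  ext ρ
  have h : algebraMap R _ ρ - fromBlocks A 0 0 D =
      fromBlocks (algebraMap R _ ρ - A) 0 0 (algebraMap R _ ρ - D) := by
    simp [Algebra.algebraMap_eq_smul_one, ← fromBlocks_one, fromBlocks_smul, sub_eq_add_neg,
      fromBlocks_neg, fromBlocks_add]
  simp only [Set.mem_union, spectrum.mem_iff, h, isUnit_iff_isUnit_det, det_fromBlocks_zero₁₂,
    IsUnit.mul_iff, not_and_or]

theorem spectrum.scalar_subset {𝕜 A : Type*} [Field 𝕜] [Ring A] [Algebra 𝕜 A] (k : 𝕜) :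
    spectrum 𝕜 (algebraMap 𝕜 A k) ⊆ {k} := by
  rcases subsingleton_or_nontrivial A with h | h
  · simp [spectrum.of_subsingleton]
  · exact (spectrum.scalar_eq k).subset

section Hermitian

variable {n : Type*} [Fintype n] [DecidableEq n] {H : Matrix n n ℝ}

theorem Matrix.IsHermitian.eigenvalues_mem_Icc {μ L : ℝ} (hH : H.IsHermitian)
    (hlow : ∀ v : EuclideanSpace ℝ n, μ * ‖v‖ ^ 2 ≤ ⟪v, toEuclideanLin H v⟫)
    (hup : ∀ v : EuclideanSpace ℝ n, ⟪v, toEuclideanLin H v⟫ ≤ L * ‖v‖ ^ 2) (i : n) :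
    hH.eigenvalues i ∈ Set.Icc μ L := by
  have hn : ‖hH.eigenvectorBasis i‖ = 1 := hH.eigenvectorBasis.orthonormal.1 i
  have h : ⟪hH.eigenvectorBasis i, toEuclideanLin H (hH.eigenvectorBasis i)⟫ =
      hH.eigenvalues i := by
    rw [toLpLin_apply, hH.mulVec_eigenvectorBasis, WithLp.toLp_smul]
    simp [inner_smul_right, hn]
  have hl := hlow (hH.eigenvectorBasis i)
  have hu := hup (hH.eigenvectorBasis i)
  rw [h, hn, one_pow, mul_one] at hl hu
  exact ⟨hl, hu⟩

theorem Matrix.IsHermitian.spectrum_map_ofReal_subset (hH : H.IsHermitian) :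
    spectrum ℂ (H.map Complex.ofReal) ⊆ Set.range (fun i ↦ (hH.eigenvalues i : ℂ)) := by
  intro c hc
  rw [mem_spectrum_iff_isRoot_charpoly,
    show H.map Complex.ofReal = H.map Complex.ofRealHom from rfl, charpoly_map,
    hH.charpoly_eq] at hc
  simp only [Polynomial.IsRoot, Polynomial.eval_map, Polynomial.eval₂_finsetProd,
    Polynomial.eval₂_sub, Polynomial.eval₂_X, Polynomial.eval₂_C, Finset.prod_eq_zero_iff,
    Finset.mem_univ, true_and, sub_eq_zero] at hc
  obtain ⟨i, hi⟩ := hc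
  exact ⟨i, hi.symm⟩

end Hermitian

section HeavyBallMatrix

variable {𝕜 n : Type*} [Field 𝕜] [Fintype n] [DecidableEq n]

/-- The linearization `[[(1 + β) Id - γ K, -β Id], [Id, 0]]` of the heavy ball recursion
`x_{k+1} = x_k - γ K x_k + β (x_k - x_{k-1})` in the variables `(x_k, x_{k-1})`. -/
def heavyBallMatrix (β γ : 𝕜) (K : Matrix n n 𝕜) : Matrix (n ⊕ n) (n ⊕ n) 𝕜 :=
  fromBlocks ((1 + β) • 1 - γ • K) (-(β • 1)) 1 0

omit [Fintype n] in
theorem heavyBallMatrix_map {𝕜' : Type*} [Field 𝕜'] (f : 𝕜 →+* 𝕜') (β γ : 𝕜)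
    (K : Matrix n n 𝕜) :
    (heavyBallMatrix β γ K).map f = heavyBallMatrix (f β) (f γ) (K.map f) := by
  ext (i | i) (j | j) <;> simp [heavyBallMatrix, one_apply, apply_ite f]

theorem exists_mem_spectrum_of_mem_spectrum_heavyBallMatrix {β γ ρ : 𝕜} {K : Matrix n n 𝕜}
    (hβ : β ≠ 0) (hγ : γ ≠ 0) (hρ : ρ ∈ spectrum 𝕜 (heavyBallMatrix β γ K)) :
    ∃ c ∈ spectrum 𝕜 K, ρ ^ 2 - (1 + β - γ * c) * ρ + β = 0 := by
  obtain ⟨x, hx, hKx⟩ := mem_spectrum_iff_exists_mulVec_eq_smul.mp hρ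
  obtain ⟨u, v, rfl⟩ : ∃ u v, x = Sum.elim u v := ⟨_, _, (Sum.elim_comp_inl_inr x).symm⟩
  rw [heavyBallMatrix, fromBlocks_mulVec] at hKx
  obtain rfl : u = ρ • v := funext fun i ↦ by simpa using congrFun hKx (Sum.inr i)
  have hv : ∀ i, (1 + β) * (ρ * v i) - γ * (ρ * (K *ᵥ v) i) - β * v i = ρ * (ρ * v i) := by
    intro i
    have h := congrFun hKx (Sum.inl i)
    simp only [Sum.elim_comp_inl, Sum.elim_comp_inr, Sum.elim_inl, sub_eq_add_neg, add_mulVec,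
      neg_mulVec, smul_mulVec, mulVec_smul, one_mulVec, zero_mulVec, add_zero, smul_add,
      smul_neg, Pi.add_apply, Pi.neg_apply, Pi.smul_apply, smul_eq_mul] at h
    linear_combination h
  have hv0 : v ≠ 0 := by
    rintro rfl
    simp at hx
  have hρ0 : ρ ≠ 0 := by
    rintro rfl
    exact hv0 (funext fun i ↦ by simpa [hβ] using hv i)
  refine ⟨((1 + β) * ρ - β - ρ ^ 2) / (γ * ρ),
    mem_spectrum_iff_exists_mulVec_eq_smul.mpr ⟨v, hv0, funext fun i ↦ ?_⟩, ?_⟩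
  · rw [Pi.smul_apply, smul_eq_mul, div_mul_eq_mul_div, eq_div_iff (mul_ne_zero hγ hρ0)]
    linear_combination -(hv i)
  · field_simp
    ring

end HeavyBallMatrix

/-- **Spectral radius of the linearized heavy ball recursion (discrete time).**
Let `0 < μ ≤ L`, `β ∈ (0,1)`, `γ ∈ (0, 2(1+β)/L)` and let `H` be a symmetric `dN × dN`
matrix with `μ‖v‖² ≤ ⟪v, Hv⟫ ≤ L‖v‖²` for all `v`. Then every complex eigenvalue of the
block matrix `A = [[(1+β)Id - γH, -β Id, 0], [Id, 0, 0], [0, 0, β Id]]` (blocks of sizes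
`dN`, `dN`, `dT`) has modulus at most `m(γ, β)`, i.e. `ρ(A) ≤ m(γ, β)`, and `m(γ, β) < 1`. -/
theorem heavy_ball_discrete_linearization_spectral_radius
    (μ L β γ : ℝ) (hμ : 0 < μ) (hμL : μ ≤ L)
    (hβ : β ∈ Set.Ioo (0 : ℝ) 1) (hγ : γ ∈ Set.Ioo 0 (2 * (1 + β) / L)) (dN dT : ℕ)
    (H : Matrix (Fin dN) (Fin dN) ℝ) (hH : H.IsSymm)
    (hlow : ∀ v : EuclideanSpace ℝ (Fin dN), μ * ‖v‖ ^ 2 ≤ ⟪v, Matrix.toEuclideanLin H v⟫)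
    (hup : ∀ v : EuclideanSpace ℝ (Fin dN), ⟪v, Matrix.toEuclideanLin H v⟫ ≤ L * ‖v‖ ^ 2) :
    (∀ ρ ∈ spectrum ℂ
      ((Matrix.fromBlocks
          (Matrix.fromBlocks ((1 + β) • (1 : Matrix (Fin dN) (Fin dN) ℝ) - γ • H)
            (-(β • (1 : Matrix (Fin dN) (Fin dN) ℝ)))
            (1 : Matrix (Fin dN) (Fin dN) ℝ) (0 : Matrix (Fin dN) (Fin dN) ℝ))
          (0 : Matrix (Fin dN ⊕ Fin dN) (Fin dT) ℝ)
          (0 : Matrix (Fin dT) (Fin dN ⊕ Fin dN) ℝ)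
          (β • (1 : Matrix (Fin dT) (Fin dT) ℝ))).map Complex.ofReal),
      ‖ρ‖ ≤ heavyBallRate μ L β γ) ∧
    heavyBallRate μ L β γ < 1 := by
  refine ⟨fun ρ hρ ↦ ?_, heavyBallRate_lt_one hμ hμL hβ hγ⟩
  have hH' : H.IsHermitian := isHermitian_iff_isSymm.mpr hH
  have hmap : (heavyBallMatrix β γ H).map Complex.ofReal =
      heavyBallMatrix (β : ℂ) γ (H.map Complex.ofReal) :=
    heavyBallMatrix_map Complex.ofRealHom ..
  have hscalar :
      (β • (1 : Matrix (Fin dT) (Fin dT) ℝ)).map Complex.ofReal = algebraMap ℂ _ β := by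
    ext i j
    simp [one_apply, Algebra.algebraMap_eq_smul_one, apply_ite Complex.ofReal]
  rw [fromBlocks_map, ← heavyBallMatrix, hmap, hscalar, Matrix.map_zero _ Complex.ofReal_zero,
    Matrix.map_zero _ Complex.ofReal_zero, spectrum_fromBlocks_zero] at hρ
  rcases hρ with hρ | hρ
  · obtain ⟨c, hc, hquad⟩ := exists_mem_spectrum_of_mem_spectrum_heavyBallMatrix
      (Complex.ofReal_ne_zero.mpr hβ.1.ne') (Complex.ofReal_ne_zero.mpr hγ.1.ne') hρ
    obtain ⟨i, rfl⟩ := hH'.spectrum_map_ofReal_subset hc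
    exact norm_le_heavyBallRate hμ hμL hβ.1.le hγ.1.le (hH'.eigenvalues_mem_Icc hlow hup i)
      (by push_cast; linear_combination hquad)
  · obtain rfl : ρ = β := spectrum.scalar_subset _ hρ
    calc ‖(β : ℂ)‖ = β := by simp [abs_of_pos hβ.1]
      _ ≤ √β := Real.le_sqrt_self_iff.mpr hβ.2.le
      _ ≤ heavyBallRate μ L β γ := sqrt_le_heavyBallRate hμ hμL hβ.1.le
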